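/- Let k ≥ 2 and let p₁, …, p_k be real numbers in [0,1] such that ∑_{l=1}^{k} (1 − p_l) ≤ 1, and for each j ∈ {2, …, k} assume the quantity D_j := (∑_{l=1}^{j−1} p_l) − (j − 2) is strictly positive. Fix j ∈ {1, …, k} and let X₁, …, X_j be independent {0,1}-valued random variables on a probability space with ℙ(X₁ = 1) = 1 − p₁ and ℙ(X_l = 1) = (1 − p_l)/D_l for each l ∈ {2, …, j}. Then ℙ(X₁ = 0 ∧ X₂ = 0 ∧ ⋯ ∧ X_{j−1} = 0 ∧ X_j = 1) = 1 − p_j. -/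

import Mathlib

open MeasureTheory ProbabilityTheory Finset

/-!
Write `q l = ℙ(X l = 1)` and `D l` for the paper's denominators, extended by `D 1 = 1`.
Then `D l * q l = 1 - p l` for every `l ≤ j`, and `D (l + 1) = D l - (1 - p l)`, so
`1 - q l = D (l + 1) / D l`. By independence the event has probability
`∏_{l < j} (1 - q l) * q j`; the product telescopes to `D j`, and `D j * q j = 1 - p j`.
-/

noncomputable def dropoutDenom (p : ℕ → ℝ) (l : ℕ) : ℝ :=
  (∑ r ∈ Icc 1 (l - 1), p r) - ((l : ℝ) - 2)

lemma dropoutDenom_one (p : ℕ → ℝ) : dropoutDenom p 1 = 1 := by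
  norm_num [dropoutDenom]

lemma dropoutDenom_succ (p : ℕ → ℝ) {l : ℕ} (hl : 1 ≤ l) :
    dropoutDenom p (l + 1) = dropoutDenom p l - (1 - p l) := by
  obtain ⟨m, rfl⟩ := Nat.exists_eq_add_of_le' hl
  simp only [dropoutDenom, Nat.add_sub_cancel, sum_Icc_succ_top (Nat.le_add_left 1 m)]
  push_cast
  ring

lemma prod_Icc_one_sub_eq_dropoutDenom {p q : ℕ → ℝ} {n : ℕ}
    (hq : ∀ l ∈ Icc 1 n, dropoutDenom p l * q l = 1 - p l) :
    ∏ l ∈ Icc 1 n, (1 - q l) = dropoutDenom p (n + 1) := by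
  induction n with
  | zero => simp [dropoutDenom_one]
  | succ n ih =>
    rw [prod_Icc_succ_top (Nat.le_add_left 1 n),
      ih fun l hl => hq l (Icc_subset_Icc_right n.le_succ hl),
      dropoutDenom_succ p (Nat.le_add_left 1 n),
      ← hq (n + 1) (right_mem_Icc.mpr (Nat.le_add_left 1 n))]
    ring

lemma setOf_zeros_then_one_eq_iInter {Ω : Type*} (X : ℕ → Ω → ℝ) {j : ℕ} (hj : 1 ≤ j) :
    {ω | (∀ l ∈ Icc 1 (j - 1), X l ω = 0) ∧ X j ω = 1} =
      ⋂ l ∈ (univ : Finset (Icc 1 j)), X l ⁻¹' (if (l : ℕ) = j then {1} else {0}) := by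
  ext ω
  simp only [Set.mem_ofPred_eq, mem_univ, Set.iInter_true, Set.mem_iInter, Set.mem_preimage,
    Subtype.forall, mem_Icc]
  constructor
  · rintro ⟨hzero, hone⟩ l hl
    split_ifs with hlj
    · simpa [hlj] using hone
    · exact hzero l (by omega)
  · intro h
    refine ⟨fun l hl => ?_, by simpa using h j ⟨hj, le_rfl⟩⟩
    simpa [show l ≠ j by omega] using h l (by omega)

section Probability

variable {Ω : Type*} [MeasurableSpace Ω] {μ : Measure Ω}

lemma measureReal_preimage_zero_eq_one_sub [IsProbabilityMeasure μ] {Y : Ω → ℝ}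
    (hY : Measurable Y) (h01 : ∀ ω, Y ω = 0 ∨ Y ω = 1) :
    μ.real (Y ⁻¹' {0}) = 1 - μ.real {ω | Y ω = 1} := by
  have hcompl : Y ⁻¹' {0} = {ω | Y ω = 1}ᶜ := by
    ext ω
    rcases h01 ω with h | h <;> simp [h]
  rw [hcompl, probReal_compl_eq_one_sub (measurableSet_eq_fun hY measurable_const)]

lemma measureReal_zeros_then_one [IsProbabilityMeasure μ] {X : ℕ → Ω → ℝ} {j : ℕ} (hj : 1 ≤ j)
    (hXmeas : ∀ l ∈ Icc 1 j, Measurable (X l))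
    (hXval : ∀ l ∈ Icc 1 j, ∀ ω, X l ω = 0 ∨ X l ω = 1)
    (hindep : iIndepFun (fun l : (Icc 1 j : Finset ℕ) => X l) μ) :
    μ.real {ω | (∀ l ∈ Icc 1 (j - 1), X l ω = 0) ∧ X j ω = 1} =
      (∏ l ∈ Icc 1 (j - 1), (1 - μ.real {ω | X l ω = 1})) * μ.real {ω | X j ω = 1} := by
  set T : ℕ → Set ℝ := fun l => if l = j then {1} else {0}
  rw [setOf_zeros_then_one_eq_iInter X hj, measureReal_def,
    hindep.measure_inter_preimage_eq_mul univ (sets := fun l => T l)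
      fun l _ => by dsimp only [T]; split_ifs <;> exact measurableSet_singleton _,
    ENNReal.toReal_prod, prod_coe_sort (Icc 1 j) fun l => (μ (X l ⁻¹' T l)).toReal,
    ← Nat.sub_add_cancel hj, prod_Icc_succ_top (Nat.le_add_left 1 (j - 1)), Nat.sub_add_cancel hj]
  congr 1
  · refine prod_congr rfl fun l hl => ?_
    have hlj : l ≠ j := by have := mem_Icc.mp hl; omega
    have hlmem : l ∈ Icc 1 j := Icc_subset_Icc_right (Nat.sub_le j 1) hl
    simp only [T, if_neg hlj]
    exact measureReal_preimage_zero_eq_one_sub (hXmeas l hlmem) (hXval l hlmem)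
  · simp only [T, if_pos rfl]
    rfl

end Probability

theorem orth_mc_dropout_consistency_general
    {Ω : Type*} [MeasurableSpace Ω] (μ : Measure Ω) [IsProbabilityMeasure μ]
    (k : ℕ) (p : ℕ → ℝ)
    (D : ℕ → ℝ)
    (hD : ∀ l, D l = (∑ r ∈ Finset.Icc 1 (l - 1), p r) - ((l : ℝ) - 2))
    (hDpos : ∀ l ∈ Finset.Icc 2 k, 0 < D l)
    (j : ℕ) (hj : j ∈ Finset.Icc 1 k)
    (X : ℕ → Ω → ℝ)
    (hXmeas : ∀ l ∈ Finset.Icc 1 j, Measurable (X l))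
    (hXval : ∀ l ∈ Finset.Icc 1 j, ∀ ω, X l ω = 0 ∨ X l ω = 1)
    (hindep : iIndepFun
      (fun l : (Finset.Icc 1 j : Finset ℕ) => X l) μ)
    (hX1 : (μ {ω | X 1 ω = 1}).toReal = 1 - p 1)
    (hXl : ∀ l ∈ Finset.Icc 2 j, (μ {ω | X l ω = 1}).toReal = (1 - p l) / D l) :
    (μ {ω | (∀ l ∈ Finset.Icc 1 (j - 1), X l ω = 0) ∧ X j ω = 1}).toReal = 1 - p j := by
  obtain ⟨hj1, hjk⟩ := mem_Icc.mp hj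
  obtain rfl : D = dropoutDenom p := funext hD
  have hmarginal : ∀ l ∈ Icc 1 j, dropoutDenom p l * μ.real {ω | X l ω = 1} = 1 - p l := by
    intro l hl
    rcases (mem_Icc.mp hl).1.eq_or_lt with rfl | hl2
    · rw [dropoutDenom_one, one_mul]
      exact hX1
    · have hDl := hDpos l (mem_Icc.mpr ⟨hl2, (mem_Icc.mp hl).2.trans hjk⟩)
      rw [measureReal_def, hXl l (mem_Icc.mpr ⟨hl2, (mem_Icc.mp hl).2⟩)]
      field_simp
  rw [← measureReal_def, measureReal_zeros_then_one hj1 hXmeas hXval hindep,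
    prod_Icc_one_sub_eq_dropoutDenom fun l hl =>
      hmarginal l (Icc_subset_Icc_right (Nat.sub_le j 1) hl),
    Nat.sub_add_cancel hj1, hmarginal j (right_mem_Icc.mpr hj1)]

/-- **Consistency of Orthogonal Monte-Carlo Dropout.**
Let `k ≥ 2` and `p 1, …, p k ∈ [0,1]` with `∑_{l=1}^k (1 - p l) ≤ 1`, and for `j ∈ {2,…,k}`
assume `D j := (∑_{l=1}^{j-1} p l) - (j - 2) > 0`. Fix `j ∈ {1,…,k}` and let `X 1, …, X j`
be independent `{0,1}`-valued random variables with `ℙ(X 1 = 1) = 1 - p 1` and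
`ℙ(X l = 1) = (1 - p l) / D l` for `l ∈ {2,…,j}`. Then
`ℙ(X 1 = 0 ∧ ⋯ ∧ X (j-1) = 0 ∧ X j = 1) = 1 - p j`. -/
theorem orth_mc_dropout_consistency
    {Ω : Type*} [MeasurableSpace Ω] (μ : Measure Ω) [IsProbabilityMeasure μ]
    (k : ℕ) (hk : 2 ≤ k) (p : ℕ → ℝ)
    (hp : ∀ l ∈ Finset.Icc 1 k, p l ∈ Set.Icc (0 : ℝ) 1)
    (hsum : ∑ l ∈ Finset.Icc 1 k, (1 - p l) ≤ 1)
    (D : ℕ → ℝ)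
    (hD : ∀ l, D l = (∑ r ∈ Finset.Icc 1 (l - 1), p r) - ((l : ℝ) - 2))
    (hDpos : ∀ l ∈ Finset.Icc 2 k, 0 < D l)
    (j : ℕ) (hj : j ∈ Finset.Icc 1 k)
    (X : ℕ → Ω → ℝ)
    (hXmeas : ∀ l ∈ Finset.Icc 1 j, Measurable (X l))
    (hXval : ∀ l ∈ Finset.Icc 1 j, ∀ ω, X l ω = 0 ∨ X l ω = 1)
    (hindep : iIndepFun
      (fun l : (Finset.Icc 1 j : Finset ℕ) => X l) μ)
    (hX1 : (μ {ω | X 1 ω = 1}).toReal = 1 - p 1)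
    (hXl : ∀ l ∈ Finset.Icc 2 j, (μ {ω | X l ω = 1}).toReal = (1 - p l) / D l) :
    (μ {ω | (∀ l ∈ Finset.Icc 1 (j - 1), X l ω = 0) ∧ X j ω = 1}).toReal = 1 - p j :=
  orth_mc_dropout_consistency_general μ k p D hD hDpos j hj X hXmeas hXval hindep hX1 hXl
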